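/- Under assumption (i) (joint independence of the instrument from all potential outcomes), for any two distinct instrument values z ≠ z̃ in {1,…,K} and any i, j ∈ {0,1}: P(Y(x_i) = j) ≤ P(X = i, Y = j | Z = z) + P(X = 1−i, Y = 0 | Z = z) + P(X = i, Y = j | Z = z̃) + P(X = 1−i, Y = 1 | Z = z̃). -/

import Mathlib

/-!
Independence of the instrument from `(Y(x₀), Y(x₁), X(·))` turns each conditional probability
`P(X = a, Y = b | Z = ζ)` into the unconditional probability `P(X(ζ) = a, Y(xₐ) = b)` of an event
about the potential variables only. The event `Y(xᵢ) = j` is covered by the four resulting events: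
unless `X(z) = i` or `X(z̃) = i`, both treatments equal `1 - i`, and `Y(x_{1-i})` is `0` or `1`.
The union bound finishes the proof.
-/

open MeasureTheory ProbabilityTheory

namespace ProbabilityTheory

variable {Ω α β : Type*} {mΩ : MeasurableSpace Ω} [MeasurableSpace α] [MeasurableSpace β]
  {μ : Measure Ω}

lemma IndepFun.cond_preimage_eq [IsFiniteMeasure μ] {Z : Ω → α} {W : Ω → β}
    (h : IndepFun Z W μ) (hZ : Measurable Z) {s : Set α} {t : Set β}
    (hs : MeasurableSet s) (ht : MeasurableSet t) (hμs : μ (Z ⁻¹' s) ≠ 0) :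
    μ[W ⁻¹' t | Z ⁻¹' s] = μ (W ⁻¹' t) := by
  rw [cond_apply (hZ hs), h.measure_inter_preimage_eq_mul _ _ hs ht, ← mul_assoc,
    ENNReal.inv_mul_cancel hμs (measure_ne_top μ _), one_mul]

end ProbabilityTheory

section InstrumentalVariable

variable {Ω κ : Type*} {Z : Ω → κ} {Xz : κ → Ω → Fin 2} {Y0 Y1 X Y : Ω → Fin 2}

def potentialOutcome (Y0 Y1 : Ω → Fin 2) (a : Fin 2) (ω : Ω) : Fin 2 :=
  if a = 0 then Y0 ω else Y1 ω

lemma fiber_inter_observed_eq (hX : ∀ ω, X ω = Xz (Z ω) ω)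
    (hY : ∀ ω, Y ω = potentialOutcome Y0 Y1 (X ω) ω) (ζ : κ) (a b : Fin 2) :
    Z ⁻¹' {ζ} ∩ {ω | X ω = a ∧ Y ω = b} =
      Z ⁻¹' {ζ} ∩ {ω | Xz ζ ω = a ∧ potentialOutcome Y0 Y1 a ω = b} := by
  ext ω
  simp only [Set.mem_inter_iff, Set.mem_preimage, Set.mem_singleton_iff, Set.mem_ofPred_eq]
  constructor
  · rintro ⟨rfl, rfl, rfl⟩
    exact ⟨rfl, (hX ω).symm, (hY ω).symm⟩
  · rintro ⟨rfl, rfl, rfl⟩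
    exact ⟨rfl, hX ω, by rw [hY, hX]⟩

lemma cond_observed_eq_potential [MeasurableSpace Ω] [MeasurableSpace κ]
    [MeasurableSingletonClass κ] {P : Measure Ω} [IsFiniteMeasure P] (hZ : Measurable Z)
    (hindep : IndepFun Z (fun ω => (Y0 ω, Y1 ω, fun z => Xz z ω)) P)
    (hX : ∀ ω, X ω = Xz (Z ω) ω) (hY : ∀ ω, Y ω = potentialOutcome Y0 Y1 (X ω) ω)
    {ζ : κ} (hζ : P (Z ⁻¹' {ζ}) ≠ 0) (a b : Fin 2) :
    P[{ω | X ω = a ∧ Y ω = b} | Z ⁻¹' {ζ}] =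
      P {ω | Xz ζ ω = a ∧ potentialOutcome Y0 Y1 a ω = b} := by
  have hfiber := hZ (measurableSet_singleton ζ)
  rw [← cond_inter_self hfiber, fiber_inter_observed_eq hX hY, cond_inter_self hfiber]
  refine hindep.cond_preimage_eq hZ (measurableSet_singleton ζ)
    (t := {p | p.2.2 ζ = a ∧ (if a = 0 then p.1 else p.2.1) = b}) ?_ hζ
  measurability

lemma cover_by_two_instrument_levels (x x' i j : Fin 2) (y : Fin 2 → Fin 2) (h : y i = j) :
    (x = i ∧ y i = j) ∨ (x = 1 - i ∧ y (1 - i) = 0) ∨ (x' = i ∧ y i = j) ∨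
      (x' = 1 - i ∧ y (1 - i) = 1) := by
  revert x x' i j y
  decide

end InstrumentalVariable

theorem stmt6
    {Ω : Type*} [MeasurableSpace Ω] (P : Measure Ω) [IsProbabilityMeasure P]
    (K : ℕ)
    (Z : Ω → Fin K) (Xz : Fin K → Ω → Fin 2) (Y0 Y1 : Ω → Fin 2)
    (hZ : Measurable Z)
    (X : Ω → Fin 2) (hX : ∀ ω, X ω = Xz (Z ω) ω)
    (Y : Ω → Fin 2) (hY : ∀ ω, Y ω = if X ω = 0 then Y0 ω else Y1 ω)
    (hpos : ∀ z, 0 < P (Z ⁻¹' {z}))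
    (hindep : IndepFun Z (fun ω => (Y0 ω, Y1 ω, fun z => Xz z ω)) P) :
    ∀ (z ztilde : Fin K), z ≠ ztilde → ∀ (i j : Fin 2),
      (P {ω | (if i = 0 then Y0 ω else Y1 ω) = j}).toReal ≤
        (P[|Z ⁻¹' {z}] {ω | X ω = i ∧ Y ω = j}).toReal +
          (P[|Z ⁻¹' {z}] {ω | X ω = 1 - i ∧ Y ω = 0}).toReal +
          (P[|Z ⁻¹' {ztilde}] {ω | X ω = i ∧ Y ω = j}).toReal +
          (P[|Z ⁻¹' {ztilde}] {ω | X ω = 1 - i ∧ Y ω = 1}).toReal := by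
  intro z ztilde _ i j
  simp only [cond_observed_eq_potential hZ hindep hX hY (hpos _).ne', ← measureReal_def]
  have hcover : {ω | potentialOutcome Y0 Y1 i ω = j} ⊆
      {ω | Xz z ω = i ∧ potentialOutcome Y0 Y1 i ω = j} ∪
        {ω | Xz z ω = 1 - i ∧ potentialOutcome Y0 Y1 (1 - i) ω = 0} ∪
        {ω | Xz ztilde ω = i ∧ potentialOutcome Y0 Y1 i ω = j} ∪
        {ω | Xz ztilde ω = 1 - i ∧ potentialOutcome Y0 Y1 (1 - i) ω = 1} := fun ω hω => by
    simpa only [Set.mem_union, Set.mem_ofPred_eq, or_assoc] using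
      cover_by_two_instrument_levels (Xz z ω) (Xz ztilde ω) i j (potentialOutcome Y0 Y1 · ω) hω
  calc P.real {ω | potentialOutcome Y0 Y1 i ω = j}
      ≤ P.real (_ ∪ _ ∪ _ ∪ _) := measureReal_mono hcover
    _ ≤ _ := by
      grw [measureReal_union_le, measureReal_union_le, measureReal_union_le]
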